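/- arXiv:2104.09726 — 2 statements merged into one kernel-verified Lean document; each statement's English description precedes it below -/
import Mathlib

section
/- For every integer n ≥ 1 and every integer k, the poly-Bernoulli numbers with level 2 are expressed in terms of the poly-Cauchy numbers with level 2 by 𝔅_{2n}^{(k)} = Σ_{m=1}^{n} Σ_{l=1}^{m} (−1)^{n−m} · 4^{m−l} · (2m)! · S₂(n,m;2) · S₂(m,l;2) · 𝔠_{2l}^{(k)}. -/
/-- Stirling numbers of the second kind with level `s`. -/
def stirling2Lev (s : ℕ) : ℕ → ℕ → ℕ
  | 0, 0 => 1
  | 0, _ + 1 => 0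
  | _ + 1, 0 => 0
  | n + 1, k + 1 => stirling2Lev s n k + (k + 1) ^ s * stirling2Lev s n (k + 1)

/-- Stirling numbers of the first kind with level `2`. -/
def stirling1Lev2 : ℕ → ℕ → ℕ
  | 0, 0 => 1
  | 0, _ + 1 => 0
  | _ + 1, 0 => 0
  | n + 1, k + 1 => stirling1Lev2 n k + n ^ 2 * stirling1Lev2 n (k + 1)

/-- Poly-Bernoulli numbers with level `2`. -/
def polyBernoulliLev2 (n : ℕ) (k : ℤ) : ℚ :=
  ∑ m ∈ Finset.range (n + 1),
    (stirling2Lev 2 n m : ℚ) * (-1) ^ (n - m) * (Nat.factorial (2 * m) : ℚ)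
      / ((2 * m + 1 : ℚ)) ^ k

/-- Poly-Cauchy numbers with level `2`. -/
def polyCauchyLev2 (n : ℕ) (k : ℤ) : ℚ :=
  ∑ m ∈ Finset.range (n + 1),
    (stirling1Lev2 n m : ℚ) * (-4) ^ (n - m) / ((2 * m + 1 : ℚ)) ^ k

lemma s2_zero_right (n : ℕ) (hn : 1 ≤ n) : stirling2Lev 2 n 0 = 0 := by
  obtain ⟨m, rfl⟩ : ∃ m, n = m + 1 := ⟨n - 1, by omega⟩; rfl

lemma s1_zero_right (n : ℕ) (hn : 1 ≤ n) : stirling1Lev2 n 0 = 0 := by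
  obtain ⟨m, rfl⟩ : ∃ m, n = m + 1 := ⟨n - 1, by omega⟩; rfl

lemma s2_eq_zero : ∀ m l, m < l → stirling2Lev 2 m l = 0 := by
  intro m
  induction m with
  | zero =>
    intro l hl
    obtain ⟨j, rfl⟩ : ∃ j, l = j + 1 := ⟨l - 1, by omega⟩; rfl
  | succ n ih =>
    intro l hl
    obtain ⟨j, rfl⟩ : ∃ j, l = j + 1 := ⟨l - 1, by omega⟩
    show stirling2Lev 2 n j + (j+1)^2 * stirling2Lev 2 n (j+1) = 0
    rw [ih j (by omega), ih (j+1) (by omega)]; ring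

lemma s1_eq_zero : ∀ l j, l < j → stirling1Lev2 l j = 0 := by
  intro l
  induction l with
  | zero =>
    intro j hj
    obtain ⟨i, rfl⟩ : ∃ i, j = i + 1 := ⟨j - 1, by omega⟩; rfl
  | succ n ih =>
    intro j hj
    obtain ⟨i, rfl⟩ : ∃ i, j = i + 1 := ⟨j - 1, by omega⟩
    show stirling1Lev2 n i + n^2 * stirling1Lev2 n (i+1) = 0
    rw [ih i (by omega), ih (i+1) (by omega)]; ring

lemma s2_succ (n k : ℕ) :
    stirling2Lev 2 (n+1) (k+1) = stirling2Lev 2 n k + (k+1)^2 * stirling2Lev 2 n (k+1) := rfl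

lemma s1_succ (n k : ℕ) :
    stirling1Lev2 (n+1) (k+1) = stirling1Lev2 n k + n^2 * stirling1Lev2 n (k+1) := rfl

lemma orth (m : ℕ) : ∀ j : ℕ,
    (∑ l ∈ Finset.range (m+1), (-1:ℚ)^l * stirling2Lev 2 m l * stirling1Lev2 l j)
      = if j = m then (-1:ℚ)^m else 0 := by
  induction m with
  | zero =>
    intro j
    simp only [Finset.sum_range_one, pow_zero, one_mul]
    match j with
    | 0 => norm_num [stirling2Lev, stirling1Lev2]
    | j + 1 => norm_num [stirling2Lev, stirling1Lev2, s1_eq_zero 0 (j+1) (by omega)]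
  | succ m ih =>
    intro j
    rw [Finset.sum_range_succ']
    have h0 : ((-1:ℚ))^0 * stirling2Lev 2 (m+1) 0 * stirling1Lev2 0 j = 0 := by
      rw [s2_zero_right (m+1) (by omega)]; ring
    rw [h0, add_zero]
    match j with
    | 0 =>
      have : ∀ i ∈ Finset.range (m+1),
          (-1:ℚ)^(i+1) * stirling2Lev 2 (m+1) (i+1) * stirling1Lev2 (i+1) 0 = 0 := by
        intro i _
        rw [s1_zero_right (i+1) (by omega)]; ring
      rw [Finset.sum_congr rfl this]
      simp
    | j + 1 =>
      set g : ℕ → ℚ := fun l => (-1:ℚ)^l * l^2 * stirling2Lev 2 m l * stirling1Lev2 l (j+1) with hg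
      have term : ∀ i ∈ Finset.range (m+1),
          (-1:ℚ)^(i+1) * stirling2Lev 2 (m+1) (i+1) * stirling1Lev2 (i+1) (j+1)
          = -((-1:ℚ)^i * stirling2Lev 2 m i * stirling1Lev2 i j) + (g (i+1) - g i) := by
        intro i _
        simp only [hg]
        rw [s2_succ, s1_succ]
        push_cast
        ring
      rw [Finset.sum_congr rfl term, Finset.sum_add_distrib, Finset.sum_range_sub g,
        Finset.sum_neg_distrib, ih j]
      have hgm : g (m+1) = 0 := by
        simp only [hg]
        rw [s2_eq_zero m (m+1) (by omega)]; push_cast; ring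
      have hg0 : g 0 = 0 := by simp [hg]
      rw [hgm, hg0]
      by_cases h : j = m
      · subst h; simp [pow_succ]
      · simp [h, fun hh : j + 1 = m + 1 => h (by omega)]

lemma claimA (m : ℕ) (hm : 1 ≤ m) (k : ℤ) :
    ∑ l ∈ Finset.Icc 1 m, (4:ℚ)^(m-l) * (stirling2Lev 2 m l : ℚ) * polyCauchyLev2 l k
      = 1 / ((2 * m + 1 : ℚ)) ^ k := by
  have hIcc : Finset.Icc 1 m = Finset.Ico 1 (m+1) := by rw [Finset.Ico_add_one_right_eq_Icc]
  have hext : ∑ l ∈ Finset.Icc 1 m, (4:ℚ)^(m-l) * (stirling2Lev 2 m l : ℚ) * polyCauchyLev2 l k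
      = ∑ l ∈ Finset.range (m+1), (4:ℚ)^(m-l) * (stirling2Lev 2 m l : ℚ) * polyCauchyLev2 l k := by
    rw [Finset.range_eq_Ico, Finset.sum_eq_sum_Ico_succ_bot (by omega), hIcc,
      s2_zero_right m hm]
    push_cast; ring
  rw [hext]
  unfold polyCauchyLev2
  have step1 : ∀ l ∈ Finset.range (m+1),
      (4:ℚ)^(m-l) * (stirling2Lev 2 m l : ℚ) *
        (∑ j ∈ Finset.range (l + 1), (stirling1Lev2 l j : ℚ) * (-4) ^ (l - j) / ((2 * j + 1 : ℚ)) ^ k)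
      = ∑ j ∈ Finset.range (m+1),
          (4:ℚ)^(m-l) * (stirling2Lev 2 m l : ℚ) *
            ((stirling1Lev2 l j : ℚ) * (-4) ^ (l - j) / ((2 * j + 1 : ℚ)) ^ k) := by
    intro l hl
    rw [Finset.mul_sum]
    apply Finset.sum_subset
    · intro j hj
      simp only [Finset.mem_range] at *
      omega
    · intro j _ hj
      simp only [Finset.mem_range, not_lt] at hj
      rw [s1_eq_zero l j (by omega)]
      push_cast; ring
  rw [Finset.sum_congr rfl step1, Finset.sum_comm]
  have step2 : ∀ j ∈ Finset.range (m+1),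
      (∑ l ∈ Finset.range (m+1),
          (4:ℚ)^(m-l) * (stirling2Lev 2 m l : ℚ) *
            ((stirling1Lev2 l j : ℚ) * (-4) ^ (l - j) / ((2 * j + 1 : ℚ)) ^ k))
      = (if j = m then (1:ℚ) else 0) / ((2 * j + 1 : ℚ)) ^ k := by
    intro j hj
    simp only [Finset.mem_range] at hj
    have congr1 : ∀ l ∈ Finset.range (m+1),
        (4:ℚ)^(m-l) * (stirling2Lev 2 m l : ℚ) *
            ((stirling1Lev2 l j : ℚ) * (-4) ^ (l - j) / ((2 * j + 1 : ℚ)) ^ k)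
        = (4:ℚ)^(m-j) * (-1)^j * ((-1)^l * (stirling2Lev 2 m l : ℚ) * (stirling1Lev2 l j : ℚ))
            / ((2 * j + 1 : ℚ)) ^ k := by
      intro l hl
      simp only [Finset.mem_range] at hl
      rcases lt_or_ge l j with h | h
      · rw [s1_eq_zero l j h]; push_cast; ring
      · have e1 : ((-4:ℚ)) ^ (l - j) = (-1:ℚ)^(l-j) * 4^(l-j) := by
          rw [← neg_one_mul, mul_pow]
        have e2 : (4:ℚ)^(m-l) * 4^(l-j) = 4^(m-j) := by
          rw [← pow_add]; congr 1; omega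
        have e3 : (-1:ℚ)^(l-j) * (-1)^j * (-1)^j = (-1)^l * (-1)^j := by
          rw [← pow_add, ← pow_add, ← pow_add]; congr 1; omega
        have e4 : (-1:ℚ)^(l-j) = (-1)^l * (-1)^j := by
          have hsq : (-1:ℚ)^j * (-1)^j = 1 := by
            rw [← pow_add]; exact Even.neg_one_pow ⟨j, rfl⟩
          calc (-1:ℚ)^(l-j) = (-1)^(l-j) * ((-1)^j * (-1)^j) := by rw [hsq, mul_one]
            _ = (-1)^l * (-1)^j := by rw [← mul_assoc, e3]
        rw [e1, e4]
        field_simp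
        ring_nf
        rw [← e2]
        ring
    rw [Finset.sum_congr rfl congr1, ← Finset.sum_div, ← Finset.mul_sum, orth m j]
    by_cases h : j = m
    · subst h
      rw [if_pos rfl, if_pos rfl, Nat.sub_self, pow_zero, one_mul]
      congr 1
      rw [← pow_add]
      exact Even.neg_one_pow ⟨_, rfl⟩
    · simp [h]
  rw [Finset.sum_congr rfl step2]
  have step3 : ∀ j ∈ Finset.range (m+1),
      (if j = m then (1:ℚ) else 0) / ((2 * j + 1 : ℚ)) ^ k
      = if j = m then 1 / ((2 * (j:ℚ) + 1 : ℚ)) ^ k else 0 := by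
    intro j _
    split_ifs <;> simp
  rw [Finset.sum_congr rfl step3, Finset.sum_ite_eq' (Finset.range (m+1)) m
    (fun j => 1 / ((2 * (j:ℚ) + 1 : ℚ)) ^ k)]
  simp


/-- `𝔅_{2n}^{(k)} = Σ_{m=1}^n Σ_{l=1}^m (−1)^{n−m} 4^{m−l} (2m)! S₂(n,m;2) S₂(m,l;2) 𝔠_{2l}^{(k)}`. -/
theorem stmt_10 (n : ℕ) (hn : 1 ≤ n) (k : ℤ) :
    polyBernoulliLev2 n k =
      ∑ m ∈ Finset.Icc 1 n, ∑ l ∈ Finset.Icc 1 m,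
        (-1 : ℚ) ^ (n - m) * (4 : ℚ) ^ (m - l) * (Nat.factorial (2 * m) : ℚ)
          * (stirling2Lev 2 n m : ℚ) * (stirling2Lev 2 m l : ℚ) * polyCauchyLev2 l k := by
  have hR : ∀ m ∈ Finset.Icc 1 n,
      (∑ l ∈ Finset.Icc 1 m,
        (-1 : ℚ) ^ (n - m) * (4 : ℚ) ^ (m - l) * (Nat.factorial (2 * m) : ℚ)
          * (stirling2Lev 2 n m : ℚ) * (stirling2Lev 2 m l : ℚ) * polyCauchyLev2 l k)
      = (-1 : ℚ) ^ (n - m) * (Nat.factorial (2 * m) : ℚ) * (stirling2Lev 2 n m : ℚ)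
          * (1 / ((2 * m + 1 : ℚ)) ^ k) := by
    intro m hm
    rw [Finset.mem_Icc] at hm
    calc ∑ l ∈ Finset.Icc 1 m,
        (-1 : ℚ) ^ (n - m) * (4 : ℚ) ^ (m - l) * (Nat.factorial (2 * m) : ℚ)
          * (stirling2Lev 2 n m : ℚ) * (stirling2Lev 2 m l : ℚ) * polyCauchyLev2 l k
        = (-1 : ℚ) ^ (n - m) * (Nat.factorial (2 * m) : ℚ) * (stirling2Lev 2 n m : ℚ)
          * ∑ l ∈ Finset.Icc 1 m, (4:ℚ)^(m-l) * (stirling2Lev 2 m l : ℚ) * polyCauchyLev2 l k := by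
          rw [Finset.mul_sum]
          exact Finset.sum_congr rfl fun l _ => by ring
      _ = _ := by rw [claimA m hm.1 k]
  rw [Finset.sum_congr rfl hR]
  unfold polyBernoulliLev2
  rw [Finset.range_eq_Ico, Finset.sum_eq_sum_Ico_succ_bot (show 0 < n+1 by omega),
    s2_zero_right n hn, Finset.Ico_add_one_right_eq_Icc]
  push_cast
  rw [zero_mul, zero_mul, zero_div, zero_add]
  exact Finset.sum_congr rfl fun m _ => by ring
end

section
/- For every integer n ≥ 1 and every integer k, one has Σ_{m=0}^{n} S₂(n,m;2) · 4^{n−m} · 𝔠_{2m}^{(k)} = 1/(2n+1)^k. -/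
/-!
Up to the sign `(-1)^(n+m)`, the triangular matrices `S₂(n,m;2)` and `S₁(m,j;2)` are mutually
inverse; this follows by induction on `n` from the two recurrences. Conjugating by the diagonal
matrix of powers of `4`, the transform `(2j+1)^(-k) ↦ 𝔠_{2m}^{(k)}` is therefore inverted by the
`S₂`-transform with weights `4^(n-m)`.
-/

open Finset

theorem stirling2Lev_eq_zero_of_lt (s : ℕ) {n k : ℕ} (h : n < k) : stirling2Lev s n k = 0 := by
  induction n generalizing k with
  | zero => obtain ⟨k, rfl⟩ := Nat.exists_eq_succ_of_ne_zero (by omega : k ≠ 0); rfl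
  | succ n ih =>
    obtain ⟨k, rfl⟩ := Nat.exists_eq_succ_of_ne_zero (by omega : k ≠ 0)
    simp [stirling2Lev, ih (k := k) (by omega), ih (k := k + 1) (by omega)]

theorem stirling1Lev2_eq_zero_of_lt {n k : ℕ} (h : n < k) : stirling1Lev2 n k = 0 := by
  induction n generalizing k with
  | zero => obtain ⟨k, rfl⟩ := Nat.exists_eq_succ_of_ne_zero (by omega : k ≠ 0); rfl
  | succ n ih =>
    obtain ⟨k, rfl⟩ := Nat.exists_eq_succ_of_ne_zero (by omega : k ≠ 0)
    simp [stirling1Lev2, ih (k := k) (by omega), ih (k := k + 1) (by omega)]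

section

variable {R : Type*} [CommRing R]

theorem sum_neg_one_pow_mul_stirling2Lev_mul_stirling1Lev2 (n j : ℕ) :
    ∑ m ∈ range (n + 1), (-1 : R) ^ m * stirling2Lev 2 n m * stirling1Lev2 m j
      = if n = j then (-1 : R) ^ n else 0 := by
  induction n generalizing j with
  | zero => cases j <;> simp [stirling2Lev, stirling1Lev2]
  | succ n ih =>
    rw [sum_range_succ']
    cases j with
    | zero => simp [stirling1Lev2, stirling2Lev]
    | succ j =>
      -- after both recurrences, the `(m+1)^2` and `m^2` terms telescope
      let t : ℕ → R := fun m ↦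
        (-1) ^ m * (m : R) ^ 2 * stirling2Lev 2 n m * stirling1Lev2 m (j + 1)
      have hstep : ∀ m ∈ range (n + 1),
          (-1 : R) ^ (m + 1) * stirling2Lev 2 (n + 1) (m + 1) * stirling1Lev2 (m + 1) (j + 1)
            = -((-1 : R) ^ m * stirling2Lev 2 n m * stirling1Lev2 m j) + (t (m + 1) - t m) := by
        intro m _
        simp only [t, stirling2Lev, stirling1Lev2]
        push_cast
        ring
      have htop : t (n + 1) = 0 := by simp [t, stirling2Lev_eq_zero_of_lt 2 (Nat.lt_succ_self n)]
      rw [sum_congr rfl hstep, sum_add_distrib, sum_range_sub, sum_neg_distrib, ih j, htop]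
      by_cases h : n = j
      · simp [h, t, pow_succ, stirling2Lev]
      · simp [h, t, stirling2Lev]

theorem pow_sub_mul_neg_pow_sub {a : R} {j m n : ℕ} (hjm : j ≤ m) (hmn : m ≤ n) :
    a ^ (n - m) * (-a) ^ (m - j) = (-1) ^ j * a ^ (n - j) * (-1) ^ m := by
  obtain ⟨d, rfl⟩ := Nat.exists_eq_add_of_le hjm
  obtain ⟨e, rfl⟩ := Nat.exists_eq_add_of_le hmn
  have hsq : (-1 : R) ^ j * (-1) ^ j = 1 := by
    rw [← pow_add]
    exact Even.neg_one_pow ⟨j, rfl⟩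
  rw [Nat.add_sub_cancel_left, Nat.add_sub_cancel_left, add_assoc, Nat.add_sub_cancel_left,
    neg_pow a]
  linear_combination -(-1 : R) ^ d * a ^ d * a ^ e * hsq

theorem sum_stirling2Lev_mul_sum_stirling1Lev2 (a : R) (f : ℕ → R) (n : ℕ) :
    ∑ m ∈ range (n + 1), (stirling2Lev 2 n m : R) * a ^ (n - m) *
        ∑ j ∈ range (m + 1), (stirling1Lev2 m j : R) * (-a) ^ (m - j) * f j = f n := by
  have hterm : ∀ m ∈ range (n + 1), ∀ j ∈ range (n + 1),
      (stirling2Lev 2 n m : R) * a ^ (n - m) * ((stirling1Lev2 m j : R) * (-a) ^ (m - j) * f j)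
        = (-1) ^ j * a ^ (n - j) * f j * ((-1) ^ m * stirling2Lev 2 n m * stirling1Lev2 m j) := by
    intro m hm j _
    rcases le_or_gt j m with hjm | hmj
    · rw [← mul_assoc, mul_mul_mul_comm, mul_comm (stirling2Lev 2 n m : R),
        pow_sub_mul_neg_pow_sub hjm (Nat.lt_succ_iff.mp (mem_range.mp hm))]
      ring
    · simp [stirling1Lev2_eq_zero_of_lt hmj]
  calc _ = ∑ m ∈ range (n + 1), ∑ j ∈ range (n + 1), (stirling2Lev 2 n m : R) * a ^ (n - m) *
          ((stirling1Lev2 m j : R) * (-a) ^ (m - j) * f j) := by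
        refine sum_congr rfl fun m hm ↦ ?_
        rw [mul_sum]
        refine sum_subset (range_subset_range.mpr (by simpa using hm)) fun j _ hj ↦ ?_
        simp [stirling1Lev2_eq_zero_of_lt (by simpa using hj : m < j)]
    _ = ∑ j ∈ range (n + 1), (-1) ^ j * a ^ (n - j) * f j *
          ∑ m ∈ range (n + 1), (-1 : R) ^ m * stirling2Lev 2 n m * stirling1Lev2 m j := by
        rw [sum_comm]
        exact sum_congr rfl fun j hj ↦ by
          rw [mul_sum]; exact sum_congr rfl fun m hm ↦ hterm m hm j hj
    _ = f n := by
        simp_rw [sum_neg_one_pow_mul_stirling2Lev_mul_stirling1Lev2, mul_ite, mul_zero]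
        rw [sum_ite_eq, if_pos (self_mem_range_succ n), Nat.sub_self, pow_zero, mul_one,
          mul_right_comm, ← pow_add, Even.neg_one_pow ⟨n, rfl⟩, one_mul]

end

theorem stmt_12_general (n : ℕ) (k : ℤ) :
    ∑ m ∈ Finset.range (n + 1),
        (stirling2Lev 2 n m : ℚ) * (4 : ℚ) ^ (n - m) * polyCauchyLev2 m k
      = 1 / ((2 * n + 1 : ℚ)) ^ k := by
  simp only [polyCauchyLev2, div_eq_mul_inv, one_mul]
  exact sum_stirling2Lev_mul_sum_stirling1Lev2 4 (fun j ↦ ((2 * j + 1 : ℚ) ^ k)⁻¹) n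

/-- `Σ_{m=0}^n S₂(n,m;2) 4^{n−m} 𝔠_{2m}^{(k)} = 1/(2n+1)^k`. -/
theorem stmt_12 (n : ℕ) (hn : 1 ≤ n) (k : ℤ) :
    ∑ m ∈ Finset.range (n + 1),
        (stirling2Lev 2 n m : ℚ) * (4 : ℚ) ^ (n - m) * polyCauchyLev2 m k
      = 1 / ((2 * n + 1 : ℚ)) ^ k :=
  stmt_12_general n k
end
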